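/- Let m and c be positive integers, let D be a positive integer with c ≠ D, let χ be a primitive quadratic Dirichlet character modulo D, and let F be the least common multiple of c and D. Then for every integer α, | ∑_{n=0}^{F−1} χ(n) · S(m, n; c) · e^{2πi n α / F} | ≤ c·√D; moreover this sum is zero whenever gcd(α, F/gcd(c,D)) ≠ 1. -/

import Mathlib

/-!
Write `g = gcd(c, D)`, `k = c / g`, `d = D / g`, so that `lcm(c, D) = kD = cd`. Opening the
Kloosterman sum and exchanging the sums, the twisted sum becomes
`∑_{v ∈ (ℤ/c)ˣ} e(mv/c) ∑_{n < kD} χ(n) e(nβ_v/(kD))` with `β_v = v⁻¹d + α`. Splitting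
`n = a + Dt`, the sum over `t` vanishes unless `k ∣ β_v`, and then the sum over `a` is the twisted
Gauss sum `χ̄(β_v/k) τ(χ)`, of absolute value at most `√D` because `χ` is primitive. Since `k` and
`d` are coprime, `k ∣ β_v` fixes `v⁻¹` modulo `k`, which leaves at most `g` values of `v`: this gives
the bound `g · k · √D = c√D`. Finally `χ̄(β_v/k) ≠ 0` forces `β_v/k` to be prime to `D`, and then
`α = k · (β_v/k) - v⁻¹d` is prime to `kd = lcm(c, D)/g`.
-/

/-- The Kloosterman sum `S(m, n; c) = ∑_{v ∈ (ℤ/cℤ)ˣ} e((m·v + n·v⁻¹)/c)`. -/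
noncomputable def klooster (m n c : ℕ) : ℂ :=
  ∑ v ∈ Finset.range c,
    if Nat.Coprime v c then
      Complex.exp (2 * Real.pi * Complex.I *
        (((m * v + n * (((v : ZMod c))⁻¹.val) : ℕ) : ℂ)) / c)
    else 0

open Complex Finset
open scoped Real

theorem Finset.sum_range_mul_eq_sum_sum {M : Type*} [AddCommMonoid M] (f : ℕ → M) (k D : ℕ) :
    ∑ n ∈ range (k * D), f n = ∑ t ∈ range k, ∑ a ∈ range D, f (a + D * t) := by
  simp only [Finset.sum_range, ← finProdFinEquiv.sum_comp, Fintype.sum_prod_type]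
  rfl

theorem ZMod.sum_range_natCast {M : Type*} [AddCommMonoid M] {N : ℕ} [NeZero N]
    (f : ZMod N → M) : ∑ n ∈ range N, f n = ∑ x : ZMod N, f x := by
  refine sum_nbij' (↑) ZMod.val ?_ ?_ ?_ ?_ ?_ <;> intros <;>
    simp_all [ZMod.val_lt, Nat.mod_eq_of_lt]

theorem ZMod.inv_inv_of_isUnit {n : ℕ} {a : ZMod n} (ha : IsUnit a) : a⁻¹⁻¹ = a :=
  ZMod.inv_eq_of_mul_eq_one n _ _ (ZMod.inv_mul_of_unit a ha)

theorem IsCoprime.mul_sub_mul {R : Type*} [CommRing R] {a b x y : R} (hab : IsCoprime a b)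
    (hxb : IsCoprime x b) (hya : IsCoprime y a) : IsCoprime (a * x - b * y) (a * b) := by
  refine IsCoprime.mul_right ?_ ?_
  · simpa [sub_eq_neg_add] using ((hab.symm.mul_left hya).neg_left).add_mul_left_left x
  · simpa [sub_eq_add_neg] using (hab.mul_left hxb).add_mul_left_left (-y)

theorem card_filter_range_dvd_mul_add_le {c k d : ℕ} (hkc : k ∣ c) (hkd : Nat.Coprime k d)
    (α : ℤ) : #{w ∈ range c | (k : ℤ) ∣ (w * d : ℕ) + α} ≤ c / k := by
  have hmaps : ∀ w ∈ {w ∈ range c | (k : ℤ) ∣ (w * d : ℕ) + α}, w / k ∈ range (c / k) := by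
    intro w hw
    simp only [mem_filter, mem_range] at hw ⊢
    exact Nat.div_lt_div_of_lt_of_dvd hkc hw.1
  refine (card_le_card_of_injOn (· / k) hmaps ?_).trans_eq (card_range _)
  intro w₁ hw₁ w₂ hw₂ hdiv
  simp only [coe_filter, mem_range, Set.mem_ofPred_eq] at hw₁ hw₂
  refine Nat.ext_div_modEq hdiv (Nat.modEq_iff_dvd.mpr ?_)
  have : (k : ℤ) ∣ (w₂ - w₁ : ℤ) * d := by
    simpa [sub_mul] using dvd_sub hw₂.2 hw₁.2
  exact (Nat.isCoprime_iff_coprime.mpr hkd).dvd_of_dvd_mul_right this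

theorem card_filter_coprime_dvd_inv_le {c k d : ℕ} [NeZero c] (hkc : k ∣ c)
    (hkd : Nat.Coprime k d) (α : ℤ) :
    #{v ∈ range c | Nat.Coprime v c ∧ (k : ℤ) ∣ ((v : ZMod c)⁻¹.val * d : ℕ) + α} ≤ c / k := by
  refine le_trans (card_le_card_of_injOn (fun v => (v : ZMod c)⁻¹.val) ?_ ?_)
    (card_filter_range_dvd_mul_add_le hkc hkd α)
  · intro v hv
    simp only [coe_filter, mem_range, Set.mem_ofPred_eq] at hv ⊢
    exact ⟨ZMod.val_lt _, hv.2.2⟩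
  · intro v₁ hv₁ v₂ hv₂ h
    simp only [coe_filter, mem_range, Set.mem_ofPred_eq] at hv₁ hv₂
    have hinv := congrArg (·⁻¹) (ZMod.val_injective c h)
    simp only [ZMod.inv_inv_of_isUnit ((ZMod.isUnit_iff_coprime _ _).mpr hv₁.2.1),
      ZMod.inv_inv_of_isUnit ((ZMod.isUnit_iff_coprime _ _).mpr hv₂.2.1)] at hinv
    simpa [ZMod.val_cast_of_lt hv₁.1, ZMod.val_cast_of_lt hv₂.1] using congrArg ZMod.val hinv

theorem sum_range_exp_mul_div {k : ℕ} [NeZero k] (β : ℤ) :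
    ∑ t ∈ range k, exp (2 * π * I * (t * β : ℤ) / k) = if (k : ℤ) ∣ β then (k : ℂ) else 0 := by
  simp_rw [← ZMod.stdAddChar_coe, Int.cast_mul, Int.cast_natCast]
  rw [ZMod.sum_range_natCast (fun x : ZMod k => ZMod.stdAddChar (x * (β : ZMod k))),
    AddChar.sum_mulShift _ (ZMod.isPrimitive_stdAddChar k)]
  simp only [ZMod.intCast_zmod_eq_zero_iff_dvd, ZMod.card]
  split_ifs <;> simp

namespace DirichletCharacter.IsPrimitive

variable {D : ℕ} [NeZero D] {χ : DirichletCharacter ℂ D}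

open ZMod in
theorem gaussSum_mul_gaussSum_inv (hχ : χ.IsPrimitive) :
    gaussSum χ stdAddChar * gaussSum χ⁻¹ stdAddChar = χ (-1) * D := by
  have hχ' : χ⁻¹.IsPrimitive := by rwa [IsPrimitive, conductor_inv]
  have hF : 𝓕 (fun j => χ j) = fun k => gaussSum χ stdAddChar * χ⁻¹ (-k) := by
    ext k; rw [hχ.fourierTransform_eq_inv_mul_gaussSum, mul_comm]
  -- Fourier inversion `𝓕 (𝓕 χ) = D χ(-·)`, evaluated at `1` with `𝓕 χ` and `𝓕 χ⁻¹` known.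
  have := congrFun (dft_dft (fun j => χ j)) 1
  rw [hF, dft_const_mul, dft_comp_neg] at this
  simpa [hχ'.fourierTransform_eq_inv_mul_gaussSum, mul_comm] using this

open ZMod in
theorem norm_gaussSum (hχ : χ.IsPrimitive) : ‖gaussSum χ stdAddChar‖ = Real.sqrt D := by
  have hχ' : χ⁻¹.IsPrimitive := by rwa [IsPrimitive, conductor_inv]
  have hstar : starRingEnd ℂ (gaussSum χ stdAddChar) = χ (-1) * gaussSum χ⁻¹ stdAddChar := by
    rw [starRingEnd_apply, star_gaussSum_eq, AddChar.inv_mulShift,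
      gaussSum_mulShift_of_isPrimitive _ hχ', inv_inv]
  have hsq : χ (-1) * χ (-1) = 1 := by rw [← map_mul, neg_one_mul, neg_neg, map_one]
  have : (normSq (gaussSum χ stdAddChar) : ℂ) = D := by
    rw [← mul_conj, hstar, mul_left_comm, hχ.gaussSum_mul_gaussSum_inv, ← mul_assoc, hsq, one_mul]
  rw [norm_def, show normSq (gaussSum χ stdAddChar) = D by exact_mod_cast this]

theorem sum_range_mul_exp (hχ : χ.IsPrimitive) (γ : ℤ) :
    ∑ a ∈ range D, χ a * exp (2 * π * I * (a * γ : ℤ) / D) =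
      χ⁻¹ γ * gaussSum χ ZMod.stdAddChar := by
  rw [← gaussSum_mulShift_of_isPrimitive _ hχ, gaussSum,
    ← ZMod.sum_range_natCast (fun x => χ x * (ZMod.stdAddChar.mulShift (γ : ZMod D)) x)]
  congr! 2 with a
  rw [AddChar.mulShift_apply, ← ZMod.stdAddChar_coe]
  push_cast; ring_nf

theorem sum_range_mul_exp_div (hχ : χ.IsPrimitive) {k : ℕ} [NeZero k] (β : ℤ) :
    ∑ n ∈ range (k * D), χ n * exp (2 * π * I * (n * β : ℤ) / (k * D : ℕ)) =
      if (k : ℤ) ∣ β then k * χ⁻¹ (β / k : ℤ) * gaussSum χ ZMod.stdAddChar else 0 := by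
  have hk : (k : ℂ) ≠ 0 := NeZero.ne _
  have hD : (D : ℂ) ≠ 0 := NeZero.ne _
  have hsplit (t a : ℕ) :
      χ (a + D * t : ℕ) * exp (2 * π * I * ((a + D * t : ℕ) * β : ℤ) / (k * D : ℕ)) =
        χ a * exp (2 * π * I * (a * β : ℤ) / (k * D : ℕ)) * exp (2 * π * I * (t * β : ℤ) / k) := by
    rw [mul_assoc (χ a), ← exp_add]
    push_cast
    rw [ZMod.natCast_self, zero_mul, add_zero]
    congr 2
    field_simp
  rw [sum_range_mul_eq_sum_sum, sum_comm]
  simp_rw [hsplit, ← sum_mul_sum, sum_range_exp_mul_div]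
  split_ifs with hβ
  · obtain ⟨γ, rfl⟩ := hβ
    have hγ (a : ℕ) : exp (2 * π * I * (a * (k * γ) : ℤ) / (k * D : ℕ)) =
        exp (2 * π * I * (a * γ : ℤ) / D) := by
      congr 1; push_cast; field_simp
    simp_rw [hγ, hχ.sum_range_mul_exp,
      Int.mul_ediv_cancel_left _ (Int.natCast_ne_zero.mpr (NeZero.ne k))]
    ring
  · rw [mul_zero]

theorem sum_mul_klooster_mul_exp (hχ : χ.IsPrimitive) (m : ℕ) (α : ℤ) {c k d : ℕ} [NeZero c]
    [NeZero k] (h : c * d = k * D) :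
    ∑ n ∈ range (k * D), χ n * klooster m n c * exp (2 * π * I * n * α / (k * D : ℕ)) =
      ∑ v ∈ range c with Nat.Coprime v c ∧ (k : ℤ) ∣ ((v : ZMod c)⁻¹.val * d : ℕ) + α,
        exp (2 * π * I * (m * v : ℕ) / c) *
          (k * χ⁻¹ ((((v : ZMod c)⁻¹.val * d : ℕ) + α) / k : ℤ) * gaussSum χ ZMod.stdAddChar) := by
  have hc : (c : ℂ) ≠ 0 := NeZero.ne _
  have hd : (d : ℂ) ≠ 0 := Nat.cast_ne_zero.mpr <|
    right_ne_zero_of_mul (h ▸ mul_ne_zero (NeZero.ne k) (NeZero.ne D))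
  have hexp (n v : ℕ) : exp (2 * π * I * (m * v + n * (v : ZMod c)⁻¹.val : ℕ) / c) *
      exp (2 * π * I * n * α / (k * D : ℕ)) = exp (2 * π * I * (m * v : ℕ) / c) *
        exp (2 * π * I * (n * (((v : ZMod c)⁻¹.val * d : ℕ) + α) : ℤ) / (k * D : ℕ)) := by
    rw [← exp_add, ← exp_add, ← h]
    congr 1
    push_cast
    field_simp
    ring
  simp_rw [klooster, mul_sum, sum_mul, mul_ite, ite_mul, mul_zero, zero_mul]
  rw [sum_comm, sum_filter]
  refine sum_congr rfl fun v _ => ?_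
  by_cases hv : Nat.Coprime v c
  · simp only [ite_and, if_pos hv]
    simp_rw [mul_assoc (χ _), hexp, mul_left_comm (χ _), ← mul_sum,
      hχ.sum_range_mul_exp_div, mul_ite, mul_zero]
  · simp [hv]

theorem norm_sum_mul_klooster_mul_exp_le (hχ : χ.IsPrimitive) (m : ℕ) (α : ℤ) {c k d : ℕ}
    [NeZero c] [NeZero k] (h : c * d = k * D) (hkd : Nat.Coprime k d) :
    ‖∑ n ∈ range (k * D), χ n * klooster m n c * exp (2 * π * I * n * α / (k * D : ℕ))‖ ≤
      c * Real.sqrt D := by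
  have hkc : k ∣ c := hkd.dvd_of_dvd_mul_right ⟨D, h⟩
  rw [hχ.sum_mul_klooster_mul_exp m α h]
  have hterm (v : ℕ) (γ : ℤ) : ‖exp (2 * π * I * (m * v : ℕ) / c) *
      (k * χ⁻¹ γ * gaussSum χ ZMod.stdAddChar)‖ ≤ k * Real.sqrt D := by
    have hexp : ‖exp (2 * π * I * (m * v : ℕ) / c)‖ = 1 := by
      rw [norm_exp]; simp
    rw [norm_mul, hexp, one_mul, norm_mul, norm_mul, hχ.norm_gaussSum, Complex.norm_natCast]
    gcongr
    exact mul_le_of_le_one_right (Nat.cast_nonneg k) (χ⁻¹.norm_le_one γ)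
  calc _ ≤ _ := norm_sum_le _ _
    _ ≤ ∑ v ∈ range c with Nat.Coprime v c ∧ (k : ℤ) ∣ ((v : ZMod c)⁻¹.val * d : ℕ) + α,
          k * Real.sqrt D := sum_le_sum fun v _ => hterm v _
    _ ≤ (c / k : ℕ) * (k * Real.sqrt D) := by
      rw [sum_const, nsmul_eq_mul]
      gcongr
      exact card_filter_coprime_dvd_inv_le hkc hkd α
    _ = c * Real.sqrt D := by rw [← mul_assoc, ← Nat.cast_mul, Nat.div_mul_cancel hkc]

theorem sum_mul_klooster_mul_exp_eq_zero (hχ : χ.IsPrimitive) (m : ℕ) {α : ℤ} {c k d : ℕ}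
    [NeZero c] [NeZero k] (h : c * d = k * D) (hkd : Nat.Coprime k d)
    (hα : ¬IsCoprime α (k * d)) :
    ∑ n ∈ range (k * D), χ n * klooster m n c * exp (2 * π * I * n * α / (k * D : ℕ)) = 0 := by
  have hkc : k ∣ c := hkd.dvd_of_dvd_mul_right ⟨D, h⟩
  have hdD : d ∣ D := hkd.symm.dvd_of_dvd_mul_left ⟨c, by rw [← h, mul_comm]⟩
  rw [hχ.sum_mul_klooster_mul_exp m α h]
  refine sum_eq_zero fun v hv => ?_
  simp only [mem_filter, mem_range] at hv
  obtain ⟨-, hvc, γ, hγ⟩ := hv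
  suffices χ⁻¹ γ = 0 by
    rw [hγ, Int.mul_ediv_cancel_left _ (Int.natCast_ne_zero.mpr (NeZero.ne k)), this]
    simp
  refine MulChar.map_nonunit _ fun hunit => hα ?_
  have hγD : IsCoprime γ D := ((ZMod.coe_int_isUnit_iff_isCoprime γ D).mp hunit).symm
  have hwc : Nat.Coprime (v : ZMod c)⁻¹.val c := by
    rw [← ZMod.isUnit_iff_coprime, ZMod.natCast_zmod_val]
    have hu := (ZMod.isUnit_iff_coprime v c).mpr hvc
    exact ⟨⟨_, _, ZMod.inv_mul_of_unit _ hu, ZMod.mul_inv_of_unit _ hu⟩, rfl⟩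
  have := (Nat.isCoprime_iff_coprime.mpr hkd).mul_sub_mul
    (hγD.of_isCoprime_of_dvd_right (Int.natCast_dvd_natCast.mpr hdD))
    (Nat.isCoprime_iff_coprime.mpr (hwc.coprime_dvd_right hkc))
  rwa [show (k : ℤ) * γ - d * (v : ZMod c)⁻¹.val = α by push_cast at hγ; linarith] at this

end DirichletCharacter.IsPrimitive

theorem stmt_11_general (m c D : ℕ) (hc : 0 < c) (hD : 0 < D)
    (χ : DirichletCharacter ℂ D) (hprim : χ.IsPrimitive)
    (α : ℤ) :
    ‖∑ n ∈ Finset.range (Nat.lcm c D), χ (n : ZMod D) * klooster m n c *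
        Complex.exp (2 * Real.pi * Complex.I * (n : ℂ) * (α : ℂ) / (Nat.lcm c D : ℂ))‖ ≤
      c * Real.sqrt D ∧
    (Int.gcd α ((Nat.lcm c D / Nat.gcd c D : ℕ) : ℤ) ≠ 1 →
      ∑ n ∈ Finset.range (Nat.lcm c D), χ (n : ZMod D) * klooster m n c *
        Complex.exp (2 * Real.pi * Complex.I * (n : ℂ) * (α : ℂ) / (Nat.lcm c D : ℂ)) = 0) := by
  have : NeZero c := ⟨hc.ne'⟩
  have : NeZero D := ⟨hD.ne'⟩
  set g := Nat.gcd c D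
  have hg : 0 < g := Nat.gcd_pos_of_pos_left D hc
  have hgc : g ∣ c := Nat.gcd_dvd_left c D
  have hgD : g ∣ D := Nat.gcd_dvd_right c D
  have : NeZero (c / g) := ⟨(Nat.div_pos (Nat.le_of_dvd hc hgc) hg).ne'⟩
  have h : c * (D / g) = c / g * D := by
    rw [← Nat.mul_div_assoc c hgD, Nat.div_mul_right_comm hgc]
  have hkd : Nat.Coprime (c / g) (D / g) := Nat.coprime_div_gcd_div_gcd hg
  rw [Nat.lcm_eq_mul_div, ← Nat.div_mul_right_comm hgc, Nat.mul_div_assoc _ hgD]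
  refine ⟨hprim.norm_sum_mul_klooster_mul_exp_le m α h hkd,
    fun hα => hprim.sum_mul_klooster_mul_exp_eq_zero m h hkd ?_⟩
  rwa [Int.isCoprime_iff_gcd_eq_one, ← Nat.cast_mul]

theorem stmt_11 (m c D : ℕ) (hm : 0 < m) (hc : 0 < c) (hD : 0 < D) (hcD : c ≠ D)
    (χ : DirichletCharacter ℂ D) (hχ : χ ≠ 1) (hχ2 : χ ^ 2 = 1) (hprim : χ.IsPrimitive)
    (α : ℤ) :
    ‖∑ n ∈ Finset.range (Nat.lcm c D), χ (n : ZMod D) * klooster m n c *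
        Complex.exp (2 * Real.pi * Complex.I * (n : ℂ) * (α : ℂ) / (Nat.lcm c D : ℂ))‖ ≤
      c * Real.sqrt D ∧
    (Int.gcd α ((Nat.lcm c D / Nat.gcd c D : ℕ) : ℤ) ≠ 1 →
      ∑ n ∈ Finset.range (Nat.lcm c D), χ (n : ZMod D) * klooster m n c *
        Complex.exp (2 * Real.pi * Complex.I * (n : ℂ) * (α : ℂ) / (Nat.lcm c D : ℂ)) = 0) :=
  stmt_11_general m c D hc hD χ hprim α
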